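/- arXiv:2406.17506 — 6 statements merged into one kernel-verified Lean document; each statement's English description precedes it below -/
import Mathlib

section
/- Let L > 0, μ ∈ (−∞, 0], κ := μ/L, and let f : E → ℝ be a differentiable function on a real inner product space E with f ∈ F_{μ,L} and f_* := inf_x f(x) > −∞. Set γ̄₁ := 3/(1 + κ + √(1 − κ + κ²)) (which lies in [3/2, 2)). Fix an integer N ≥ 1 and stepsizes γ_0,…,γ_{N−1} > 0 with γ_i L ∈ (0, γ̄₁] for every i, and let x_{i+1} = x_i − γ_i ∇f(x_i). Then (1/(2L)) · min_{0≤i≤N} ‖∇f(x_i)‖² ≤ (f(x_0) − f_*) / ( 1 + Σ_{i=0}^{N−1} γ_i L · p(γ_i L, γ_i μ) ). -/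
noncomputable def pcoef (l u : ℝ) : ℝ := 2 - -(l * u) / ((1 - u) - |1 - l|)

/-!
For `f ∈ F_{μ,L}` the function `f - μ/2‖·‖²` is convex and `(L - μ)`-smooth, which yields the
interpolation inequality between any two points. Write it at `(x, y)` and at `(y, x)` for a
gradient step `y = x - γ∇f(x)`. For `γL ≤ 1` the second one alone, with the cross term
`⟪∇f(y), ∇f(x)⟫` bounded by Young's inequality, gives the one-step decrease
`f(y) + γ p(γL, γμ)/2 · m ≤ f(x)`, where `m` bounds both squared gradient norms from below; for
`γL ≥ 1` the same follows from the combination of the two in which the cross term cancels. The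
stepsize bound `γL ≤ γ̄₁` is equivalent to `(2 - γL)(2 - γμ) ≥ 1`, which keeps the coefficient of
`‖∇f(x)‖²` in that combination nonnegative. Summing the decrease over the `N` steps and bounding
the last value by `f_* + ‖∇f(x_N)‖²/(2L)` gives the rate.
-/

open Set Finset RealInnerProductSpace

section FirstOrder

variable {E : Type*} [NormedAddCommGroup E] [InnerProductSpace ℝ E]

lemma inner_sub_smul_add_half_mul_norm_sq (g x y : E) (c : ℝ) :
    ⟪g - c • x, y - x⟫ + c / 2 * ‖y‖ ^ 2 - c / 2 * ‖x‖ ^ 2 =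
      ⟪g, y - x⟫ + c / 2 * ‖y - x‖ ^ 2 := by
  rw [inner_sub_left, real_inner_smul_left, inner_sub_right x, real_inner_self_eq_norm_sq,
    norm_sub_sq_real, real_inner_comm y x]
  ring

variable [CompleteSpace E] {f : E → ℝ} {g x : E}

lemma HasGradientAt.neg (hf : HasGradientAt f g x) : HasGradientAt (fun z => -f z) (-g) x := by
  rw [hasGradientAt_iff_hasFDerivAt, map_neg]
  exact (hasGradientAt_iff_hasFDerivAt.mp hf).neg

lemma HasGradientAt.sub_half_mul_norm_sq (hf : HasGradientAt f g x) (c : ℝ) :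
    HasGradientAt (fun z => f z - c / 2 * ‖z‖ ^ 2) (g - c • x) x := by
  rw [hasGradientAt_iff_hasFDerivAt]
  refine ((hasGradientAt_iff_hasFDerivAt.mp hf).sub
    ((hasStrictFDerivAt_norm_sq x).hasFDerivAt.const_mul (c / 2))).congr_fderiv ?_
  ext v
  simp only [sub_apply, InnerProductSpace.toDual_apply_apply, smul_apply, coe_innerSL_apply,
    nsmul_eq_mul, Nat.cast_ofNat, smul_eq_mul, map_sub, map_smul, sub_right_inj]
  ring

lemma ConvexOn.add_inner_le_of_hasGradientAt (hconv : ConvexOn ℝ univ f)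
    (hf : HasGradientAt f g x) (y : E) : f x + ⟪g, y - x⟫ ≤ f y := by
  have hline : HasDerivAt (fun t : ℝ => x + t • (y - x)) (y - x) 0 := by
    simpa using ((hasDerivAt_id (0 : ℝ)).smul_const (y - x)).const_add x
  have hderiv : HasDerivAt (fun t : ℝ => f (x + t • (y - x))) ⟪g, y - x⟫ 0 :=
    (hasGradientAt_iff_hasFDerivAt.mp hf).comp_hasDerivAt_of_eq 0 hline (by simp)
  have hconv' : ConvexOn ℝ univ (fun t : ℝ => f (x + t • (y - x))) := by
    simpa [Function.comp_def, AffineMap.lineMap_apply, add_comm] using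
      hconv.comp_affineMap (AffineMap.lineMap x y)
  have hslope := hconv'.le_slope_of_hasDerivAt (mem_univ 0) (mem_univ 1) one_pos hderiv
  simp only [slope_def_field, one_smul, add_sub_cancel, zero_smul, add_zero, sub_zero,
    div_one] at hslope
  linarith

lemma add_inner_add_half_mul_norm_sq_le {c : ℝ}
    (hconv : ConvexOn ℝ univ fun z => f z - c / 2 * ‖z‖ ^ 2) (hf : HasGradientAt f g x) (y : E) :
    f x + ⟪g, y - x⟫ + c / 2 * ‖y - x‖ ^ 2 ≤ f y := by
  have := hconv.add_inner_le_of_hasGradientAt (hf.sub_half_mul_norm_sq c) y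
  linarith [inner_sub_smul_add_half_mul_norm_sq g x y c]

lemma le_add_inner_add_half_mul_norm_sq {L : ℝ}
    (hconv : ConvexOn ℝ univ fun z => L / 2 * ‖z‖ ^ 2 - f z) (hf : HasGradientAt f g x) (y : E) :
    f y ≤ f x + ⟪g, y - x⟫ + L / 2 * ‖y - x‖ ^ 2 := by
  have hconv' : ConvexOn ℝ univ fun z => -f z - -L / 2 * ‖z‖ ^ 2 := by
    convert hconv using 2; ring
  have := add_inner_add_half_mul_norm_sq_le hconv' hf.neg y
  rw [inner_neg_left] at this
  linarith

lemma ConvexOn.add_inner_add_one_div_mul_norm_sq_sub_le {L : ℝ} (hL : 0 < L) {f' : E → E}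
    (hconv : ConvexOn ℝ univ f) (hsmooth : ConvexOn ℝ univ fun z => L / 2 * ‖z‖ ^ 2 - f z)
    (hf : ∀ x, HasGradientAt f (f' x) x) (x y : E) :
    f x + ⟪f' x, y - x⟫ + 1 / (2 * L) * ‖f' y - f' x‖ ^ 2 ≤ f y := by
  set d := f' y - f' x
  -- the minimiser of the quadratic upper bound at `y`
  set z := y - (1 / L) • d with hz
  have hlow := hconv.add_inner_le_of_hasGradientAt (hf x) z
  have hup := le_add_inner_add_half_mul_norm_sq hsmooth (hf y) z
  have hzx : z - x = (y - x) - (1 / L) • d := by rw [hz]; abel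
  have hzy : z - y = -((1 / L) • d) := by rw [hz]; abel
  rw [hzx, inner_sub_right, real_inner_smul_right] at hlow
  rw [hzy, inner_neg_right, real_inner_smul_right, norm_neg, norm_smul, mul_pow,
    Real.norm_eq_abs, sq_abs] at hup
  have hd : 1 / L * ⟪f' y, d⟫ - 1 / L * ⟪f' x, d⟫ = 1 / L * ‖d‖ ^ 2 := by
    rw [← mul_sub, ← inner_sub_left, real_inner_self_eq_norm_sq]
  have hcoef : 1 / L * ‖d‖ ^ 2 - L / 2 * ((1 / L) ^ 2 * ‖d‖ ^ 2) = 1 / (2 * L) * ‖d‖ ^ 2 := by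
    field_simp; ring
  linarith

lemma interpolation_inequality {L μ : ℝ} (hμL : μ < L) {f' : E → E}
    (hf : ∀ x, HasGradientAt f (f' x) x)
    (hsmooth : ConvexOn ℝ univ fun z => L / 2 * ‖z‖ ^ 2 - f z)
    (hcurv : ConvexOn ℝ univ fun z => f z - μ / 2 * ‖z‖ ^ 2) (x y : E) :
    f x + ⟪f' x, y - x⟫ + μ / 2 * ‖y - x‖ ^ 2
      + 1 / (2 * (L - μ)) * ‖f' y - f' x - μ • (y - x)‖ ^ 2 ≤ f y := by
  have hsmooth' :
      ConvexOn ℝ univ fun z => (L - μ) / 2 * ‖z‖ ^ 2 - (f z - μ / 2 * ‖z‖ ^ 2) := by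
    convert hsmooth using 2; ring
  have := hcurv.add_inner_add_one_div_mul_norm_sq_sub_le (sub_pos.mpr hμL) hsmooth'
    (fun z => (hf z).sub_half_mul_norm_sq μ) x y
  rw [show f' y - μ • y - (f' x - μ • x) = f' y - f' x - μ • (y - x) by module] at this
  linarith [inner_sub_smul_add_half_mul_norm_sq (f' x) x y μ]

end FirstOrder

section Pcoef

variable {l u : ℝ}

lemma pcoef_of_le_one (hul : u < l) (hl : l ≤ 1) :
    pcoef l u = (2 * (l - u) + l * u) / (l - u) := by
  rw [pcoef, abs_of_nonneg (sub_nonneg.mpr hl)]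
  field_simp [(sub_pos.mpr hul).ne']
  ring

lemma pcoef_of_one_le (hl : 1 ≤ l) (hlu : l + u < 2) :
    pcoef l u = (2 - l) * (2 - u) / (2 - l - u) := by
  have : 2 - l - u ≠ 0 := by linarith
  rw [pcoef, abs_of_nonpos (sub_nonpos.mpr hl), show 1 - u - -(1 - l) = 2 - l - u by ring]
  field_simp
  ring

lemma lt_two_of_one_le_two_sub_mul_two_sub (hu : u ≤ 0) (h : 1 ≤ (2 - l) * (2 - u)) :
    l < 2 := by
  by_contra! hl
  nlinarith

lemma pcoef_pos (hl : 0 < l) (hu : u ≤ 0) (h : 1 ≤ (2 - l) * (2 - u)) : 0 < pcoef l u := by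
  have hl2 := lt_two_of_one_le_two_sub_mul_two_sub hu h
  rcases le_total l 1 with hl1 | hl1
  · rw [pcoef_of_le_one (by linarith) hl1]
    apply div_pos _ (by linarith)
    nlinarith
  · rw [pcoef_of_one_le hl1 (by linarith)]
    exact div_pos (by linarith) (by linarith)

/-- `hxy` and `hyx` are the interpolation inequalities at `(x, y)` and `(y, x)` for
`y = x - γ∇f(x)`, multiplied by `2(L - μ)`, with `l = γL`, `u = γμ`, `X = ‖∇f(x)‖²`,
`Y = ‖∇f(y)‖²`, `s = ⟪∇f(y), ∇f(x)⟫`, `R = ‖∇f(y) - (1 - u)∇f(x)‖²` and `δ = (f(x) - f(y))/γ`. -/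
lemma pcoef_mul_le {X Y s R δ m : ℝ} (hl : 0 < l) (hu : u ≤ 0) (h : 1 ≤ (2 - l) * (2 - u))
    (hmX : m ≤ X) (hmY : m ≤ Y) (hs : 2 * s ≤ X + Y)
    (hR : R = Y - 2 * (1 - u) * s + (1 - u) ^ 2 * X)
    (hxy : R + (l - u) * (u - 2) * X ≤ -(2 * (l - u) * δ))
    (hyx : R + (l - u) * (2 * s + u * X) ≤ 2 * (l - u) * δ) :
    pcoef l u * m ≤ 2 * δ := by
  have hl2 := lt_two_of_one_le_two_sub_mul_two_sub hu h
  subst hR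
  rcases le_total l 1 with hl1 | hl1
  · -- `hyx` alone, with `2(l - 1)s ≥ (l - 1)(X + Y)`
    have key : (2 * (l - u) + l * u) * m ≤ 2 * (l - u) * δ := by
      nlinarith [mul_le_mul_of_nonpos_left hs (by linarith : l - 1 ≤ 0),
        mul_le_mul_of_nonneg_left hmY hl.le,
        mul_le_mul_of_nonneg_left hmX (by nlinarith : 0 ≤ l - 2 * u + l * u)]
    rw [pcoef_of_le_one (by linarith) hl1, div_mul_eq_mul_div, div_le_iff₀ (by linarith)]
    linarith
  · -- `(1 - u) hyx + (l - 1) hxy`, in which `s` cancels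
    have key : (l - u) * ((2 - l) * (2 - u) * m) ≤ (l - u) * (2 * (2 - l - u) * δ) := by
      nlinarith [mul_le_mul_of_nonneg_left hmY (by linarith : 0 ≤ l - u),
        mul_le_mul_of_nonneg_left hmX (by nlinarith : 0 ≤ (l - u) * ((2 - l) * (2 - u) - 1))]
    rw [pcoef_of_one_le hl1 (by linarith), div_mul_eq_mul_div, div_le_iff₀ (by linarith)]
    linarith [le_of_mul_le_mul_left key (by linarith)]

end Pcoef

/-- `3 / (1 + κ + √(1 - κ + κ²))` is the smaller root of `(2 - l)(2 - κl) = 1`. -/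
lemma one_le_two_sub_mul_two_sub_of_le_three_div {l κ : ℝ} (hl : 0 ≤ l) (hκ : κ ≤ 0)
    (hle : l ≤ 3 / (1 + κ + √(1 - κ + κ ^ 2))) : 1 ≤ (2 - l) * (2 - κ * l) := by
  set r := √(1 - κ + κ ^ 2)
  have hr0 : 0 ≤ r := Real.sqrt_nonneg _
  have hr2 : r ^ 2 = 1 - κ + κ ^ 2 := Real.sq_sqrt (by nlinarith)
  have hκr : -κ < r := by nlinarith
  rw [le_div_iff₀ (by linarith)] at hle
  have hlr : l * r ≤ 3 - l - κ * l := by linarith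
  have hsq : (l * r) ^ 2 ≤ (3 - l - κ * l) ^ 2 := pow_le_pow_left₀ (by positivity) hlr 2
  nlinarith

section Descent

variable {E : Type*} [NormedAddCommGroup E] [InnerProductSpace ℝ E] [CompleteSpace E]
  {f : E → ℝ} {f' : E → E} {L μ : ℝ}

lemma gradient_step_descent {γ m : ℝ} (hL : 0 < L) (hμ : μ ≤ 0) (hγ : 0 < γ)
    (hstep : 1 ≤ (2 - γ * L) * (2 - γ * μ)) (hf : ∀ x, HasGradientAt f (f' x) x)
    (hsmooth : ConvexOn ℝ univ fun z => L / 2 * ‖z‖ ^ 2 - f z)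
    (hcurv : ConvexOn ℝ univ fun z => f z - μ / 2 * ‖z‖ ^ 2) {x : E}
    (hmx : m ≤ ‖f' x‖ ^ 2) (hmy : m ≤ ‖f' (x - γ • f' x)‖ ^ 2) :
    f (x - γ • f' x) + γ * pcoef (γ * L) (γ * μ) / 2 * m ≤ f x := by
  have hμL : μ < L := by linarith
  set y := x - γ • f' x with hy
  have hxy := interpolation_inequality hμL hf hsmooth hcurv x y
  have hyx := interpolation_inequality hμL hf hsmooth hcurv y x
  have hyx_sub : y - x = -(γ • f' x) := by rw [hy]; abel
  have hxy_sub : x - y = γ • f' x := by rw [hy]; abel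
  set w := f' y - (1 - γ * μ) • f' x
  rw [show f' y - f' x - μ • (y - x) = w by rw [hyx_sub]; module, hyx_sub, inner_neg_right,
    real_inner_smul_right, real_inner_self_eq_norm_sq, norm_neg, norm_smul, mul_pow,
    Real.norm_eq_abs, sq_abs] at hxy
  rw [show f' x - f' y - μ • (x - y) = -w by rw [hxy_sub]; module, hxy_sub,
    real_inner_smul_right, norm_neg, norm_smul, mul_pow, Real.norm_eq_abs, sq_abs] at hyx
  have hw : ‖w‖ ^ 2 =
      ‖f' y‖ ^ 2 - 2 * (1 - γ * μ) * ⟪f' y, f' x⟫ + (1 - γ * μ) ^ 2 * ‖f' x‖ ^ 2 := by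
    rw [norm_sub_sq_real, real_inner_smul_right, norm_smul, mul_pow, Real.norm_eq_abs, sq_abs]
    ring
  have hinner : 2 * ⟪f' y, f' x⟫ ≤ ‖f' x‖ ^ 2 + ‖f' y‖ ^ 2 := by
    linarith [norm_sub_sq_real (f' y) (f' x), sq_nonneg ‖f' y - f' x‖]
  have hδ : (γ * L - γ * μ) * ((f x - f y) / γ) = (L - μ) * (f x - f y) := by
    field_simp
  have hinv : 2 * (L - μ) * (1 / (2 * (L - μ))) = 1 := by
    field_simp [(sub_pos.mpr hμL).ne']
  have key := pcoef_mul_le (l := γ * L) (u := γ * μ) (δ := (f x - f y) / γ) (mul_pos hγ hL)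
    (mul_nonpos_of_nonneg_of_nonpos hγ.le hμ) hstep hmx hmy hinner hw
    (by linear_combination 2 * (L - μ) * hxy - ‖w‖ ^ 2 * hinv + 2 * hδ)
    (by linear_combination 2 * (L - μ) * hyx - ‖w‖ ^ 2 * hinv - 2 * hδ)
  have hγδ : γ * (2 * ((f x - f y) / γ)) = 2 * (f x - f y) := by
    field_simp
  have := mul_le_mul_of_nonneg_left key hγ.le
  rw [hγδ] at this
  linarith

lemma iInf_add_norm_sq_div_le {g z : E} (hL : 0 < L)
    (hsmooth : ConvexOn ℝ univ fun z => L / 2 * ‖z‖ ^ 2 - f z) (hf : HasGradientAt f g z)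
    (hbdd : BddBelow (range f)) : (⨅ y, f y) + ‖g‖ ^ 2 / (2 * L) ≤ f z := by
  have h := le_add_inner_add_half_mul_norm_sq hsmooth hf (z - (1 / L) • g)
  rw [sub_sub_cancel_left, inner_neg_right, real_inner_smul_right, real_inner_self_eq_norm_sq,
    norm_neg, norm_smul, mul_pow, Real.norm_eq_abs, sq_abs] at h
  have hcoef : 1 / L * ‖g‖ ^ 2 - L / 2 * ((1 / L) ^ 2 * ‖g‖ ^ 2) = ‖g‖ ^ 2 / (2 * L) := by
    field_simp
    ring
  linarith [ciInf_le hbdd (z - (1 / L) • g)]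

end Descent

lemma add_sum_range_le_of_succ_add_le {a c : ℕ → ℝ} {n : ℕ}
    (h : ∀ i < n, a (i + 1) + c i ≤ a i) : a n + ∑ i ∈ range n, c i ≤ a 0 := by
  have := Finset.sum_le_sum fun i hi => le_sub_iff_add_le'.mpr (h i (Finset.mem_range.mp hi))
  rw [Finset.sum_range_sub'] at this
  linarith

theorem gd_nonconvex_rate_variable_stepsizes_general
    {E : Type*} [NormedAddCommGroup E] [InnerProductSpace ℝ E] [CompleteSpace E]
    (L μ : ℝ) (hL : 0 < L) (hμ : μ ≤ 0)
    (κ : ℝ) (hκ : κ = μ / L)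
    (f : E → ℝ) (hdiff : Differentiable ℝ f)
    (hsmooth : ConvexOn ℝ Set.univ (fun z => L / 2 * ‖z‖ ^ 2 - f z))
    (hcurv : ConvexOn ℝ Set.univ (fun z => f z - μ / 2 * ‖z‖ ^ 2))
    (hbdd : BddBelow (Set.range f))
    (gbar1 : ℝ) (hgbar1 : gbar1 = 3 / (1 + κ + Real.sqrt (1 - κ + κ ^ 2)))
    (N : ℕ)
    (γ : ℕ → ℝ) (hγ : ∀ i < N, 0 < γ i ∧ γ i * L ≤ gbar1)
    (x : ℕ → E) (hx : ∀ i < N, x (i + 1) = x i - γ i • gradient f (x i)) :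
    1 / (2 * L) * (⨅ i : Fin (N + 1), ‖gradient f (x i)‖ ^ 2) ≤
      (f (x 0) - ⨅ y, f y) /
        (1 + ∑ i ∈ Finset.range N, γ i * L * pcoef (γ i * L) (γ i * μ)) := by
  have hgrad : ∀ z, HasGradientAt f (gradient f z) z := fun z => (hdiff z).hasGradientAt
  have hl : ∀ i < N, 0 < γ i * L := fun i hi => mul_pos (hγ i hi).1 hL
  have hu : ∀ i < N, γ i * μ ≤ 0 := fun i hi => mul_nonpos_of_nonneg_of_nonpos (hγ i hi).1.le hμ
  have hstep : ∀ i < N, 1 ≤ (2 - γ i * L) * (2 - γ i * μ) := fun i hi => by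
    convert one_le_two_sub_mul_two_sub_of_le_three_div (hl i hi).le
      (hκ ▸ div_nonpos_of_nonpos_of_nonneg hμ hL.le) (hgbar1 ▸ (hγ i hi).2) using 2
    rw [hκ]
    field_simp
  set m := ⨅ i : Fin (N + 1), ‖gradient f (x i)‖ ^ 2
  have hm : ∀ i ≤ N, m ≤ ‖gradient f (x i)‖ ^ 2 := fun i hi =>
    ciInf_le (Finite.bddBelow_range _) (⟨i, Nat.lt_succ_of_le hi⟩ : Fin (N + 1))
  set S := ∑ i ∈ Finset.range N, γ i * L * pcoef (γ i * L) (γ i * μ)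
  have hS : 0 ≤ S := Finset.sum_nonneg fun i hi => by
    have hi := Finset.mem_range.mp hi
    exact (mul_pos (hl i hi) (pcoef_pos (hl i hi) (hu i hi) (hstep i hi))).le
  have hdescent : f (x N) + S * (m / (2 * L)) ≤ f (x 0) := by
    rw [Finset.sum_mul]
    refine add_sum_range_le_of_succ_add_le (a := fun i => f (x i))
      (c := fun i => γ i * L * pcoef (γ i * L) (γ i * μ) * (m / (2 * L))) fun i hi => ?_
    have := gradient_step_descent hL hμ (hγ i hi).1 (hstep i hi) hgrad hsmooth hcurv
      (hm i hi.le) (hx i hi ▸ hm (i + 1) hi)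
    rw [hx i hi]
    convert this using 2
    field_simp
  have hlast := iInf_add_norm_sq_div_le hL hsmooth (hgrad (x N)) hbdd
  have hmN : m / (2 * L) ≤ ‖gradient f (x N)‖ ^ 2 / (2 * L) := by gcongr; exact hm N le_rfl
  rw [le_div_iff₀ (by linarith),
    show 1 / (2 * L) * m * (1 + S) = m / (2 * L) + S * (m / (2 * L)) by ring]
  linarith

/-- **Rate of gradient descent with variable stepsizes on smooth weakly convex functions
(Theorem 4 / `thm:wc_GM_hypo`).**
Let `L > 0`, `μ ≤ 0`, `κ = μ/L`, `f ∈ F_{μ,L}` bounded below, and run `N ≥ 1` steps with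
stepsizes `γ_i` satisfying `0 < γ_i L ≤ γ̄₁ := 3/(1 + κ + √(1 − κ + κ²))`. Then
`(1/(2L))·min_{0≤i≤N} ‖∇f(x_i)‖² ≤ (f(x₀) − f_*)/(1 + Σ_i γ_i L·p(γ_i L, γ_i μ))`. -/
theorem gd_nonconvex_rate_variable_stepsizes
    {E : Type*} [NormedAddCommGroup E] [InnerProductSpace ℝ E] [CompleteSpace E]
    (L μ : ℝ) (hL : 0 < L) (hμ : μ ≤ 0)
    (κ : ℝ) (hκ : κ = μ / L)
    (f : E → ℝ) (hdiff : Differentiable ℝ f)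
    (hsmooth : ConvexOn ℝ Set.univ (fun z => L / 2 * ‖z‖ ^ 2 - f z))
    (hcurv : ConvexOn ℝ Set.univ (fun z => f z - μ / 2 * ‖z‖ ^ 2))
    (hbdd : BddBelow (Set.range f))
    (gbar1 : ℝ) (hgbar1 : gbar1 = 3 / (1 + κ + Real.sqrt (1 - κ + κ ^ 2)))
    (N : ℕ) (hN : 1 ≤ N)
    (γ : ℕ → ℝ) (hγ : ∀ i < N, 0 < γ i ∧ γ i * L ≤ gbar1)
    (x : ℕ → E) (hx : ∀ i < N, x (i + 1) = x i - γ i • gradient f (x i)) :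
    1 / (2 * L) * (⨅ i : Fin (N + 1), ‖gradient f (x i)‖ ^ 2) ≤
      (f (x 0) - ⨅ y, f y) /
        (1 + ∑ i ∈ Finset.range N, γ i * L * pcoef (γ i * L) (γ i * μ)) :=
  gd_nonconvex_rate_variable_stepsizes_general L μ hL hμ κ hκ f hdiff hsmooth hcurv hbdd gbar1
    hgbar1 N γ hγ x hx
end

section
/- For every κ ∈ (−∞, 1) and every integer k ≥ 1, the function t ↦ T_k(t, κ) = E_k(1 − κ·t) − E_k(1 − t) is strictly monotonically increasing on the open interval (1, 2/(1 + max{κ, 0})). -/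
/-!
Differentiating, `T_k'(t) = E_k'(1 - t) - κ E_k'(1 - κ t)` with `E_k'(x) = -∑ j / x^(j+1)`.
Group the terms of this sum in pairs `j = 2m+1, 2m+2`. At `a = 1 - t ∈ (-1, 0)` every pair of
`-E_k'(a)` is below `-1`, because the odd power `a^(2m+3)` is negative and small; hence
`E_k'(1 - t) > k`. At `u = 1 - κ t > 0` every pair is nonnegative, which settles `κ ≥ 0`; for
`κ = -x < 0` we have `u ≥ 1 + x`, and the quadratic Bernoulli inequality
`(1 + x)^(2m+2) ≥ (4m+3) x` bounds `x` times each pair by `1`, so `-κ E_k'(u) ≥ -k`.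
-/

/-- `E_k(x) := Σ_{j=1}^{2k} x^{−j}` (so `E_0 = 0`). -/
noncomputable def Efun (k : ℕ) (x : ℝ) : ℝ := ∑ j ∈ Finset.Icc 1 (2 * k), x ^ (-(j : ℤ))

/-- `T_k(t, κ) := E_k(1 − κ·t) − E_k(1 − t)`. -/
noncomputable def Tfun (k : ℕ) (t κ : ℝ) : ℝ := Efun k (1 - κ * t) - Efun k (1 - t)

open Finset

theorem Finset.sum_Icc_one_two_mul {M : Type*} [AddCommMonoid M] (f : ℕ → M) (k : ℕ) :
    ∑ j ∈ Icc 1 (2 * k), f j = ∑ m ∈ range k, (f (2 * m + 1) + f (2 * m + 2)) := by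
  induction k with
  | zero => simp
  | succ k ih =>
    rw [show 2 * (k + 1) = 2 * k + 1 + 1 by ring, sum_Icc_succ_top (by omega),
      sum_Icc_succ_top (by omega), ih, sum_range_succ, add_assoc]

theorem one_add_mul_add_choose_two_mul_sq_le_pow {x : ℝ} (hx : 0 ≤ x) (n : ℕ) :
    1 + n * x + n.choose 2 * x ^ 2 ≤ (1 + x) ^ n := by
  induction n with
  | zero => simp
  | succ n ih =>
    rw [Nat.choose_succ_succ, Nat.choose_one_right, pow_succ (1 + x)]
    push_cast
    nlinarith [mul_le_mul_of_nonneg_right ih (by linarith : 0 ≤ 1 + x),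
      mul_nonneg (Nat.cast_nonneg (n.choose 2) : (0 : ℝ) ≤ n.choose 2) (pow_nonneg hx 3)]

theorem two_mul_sub_one_mul_le_one_add_pow {x : ℝ} (hx : 0 ≤ x) {n : ℕ} (hn : 1 ≤ n) :
    (2 * n - 1) * x ≤ (1 + x) ^ n := by
  have hn' : (1 : ℝ) ≤ n := by exact_mod_cast hn
  have h := one_add_mul_add_choose_two_mul_sq_le_pow hx n
  rw [Nat.cast_choose_two] at h
  nlinarith [sq_nonneg ((n - 1) * x - 1), mul_nonneg (sub_nonneg.2 hn') (sq_nonneg x)]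

noncomputable def EfunDeriv (k : ℕ) (x : ℝ) : ℝ := -∑ j ∈ Icc 1 (2 * k), (j : ℝ) / x ^ (j + 1)

theorem hasDerivAt_Efun (k : ℕ) {x : ℝ} (hx : x ≠ 0) : HasDerivAt (Efun k) (EfunDeriv k x) x := by
  unfold Efun EfunDeriv
  rw [← sum_neg_distrib]
  refine HasDerivAt.fun_sum fun j _ => (hasDerivAt_zpow _ x (Or.inl hx)).congr_deriv ?_
  rw [show -(j : ℤ) - 1 = -((j + 1 : ℕ) : ℤ) by push_cast; ring, zpow_neg, zpow_natCast]
  push_cast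
  ring

theorem hasDerivAt_Tfun (k : ℕ) {t κ : ℝ} (hu : 1 - κ * t ≠ 0) (ha : 1 - t ≠ 0) :
    HasDerivAt (fun t => Tfun k t κ) (EfunDeriv k (1 - t) - κ * EfunDeriv k (1 - κ * t)) t := by
  have hu' := (hasDerivAt_Efun k hu).comp t (((hasDerivAt_id t).const_mul κ).const_sub 1)
  have ha' := (hasDerivAt_Efun k ha).comp t ((hasDerivAt_id t).const_sub 1)
  exact (hu'.fun_sub ha').congr_deriv (by ring)

noncomputable def pairTerm (m : ℕ) (x : ℝ) : ℝ :=
  (2 * m + 1) / x ^ (2 * m + 2) + (2 * m + 2) / x ^ (2 * m + 3)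

theorem EfunDeriv_eq_neg_sum_pairTerm (k : ℕ) (x : ℝ) :
    EfunDeriv k x = -∑ m ∈ range k, pairTerm m x := by
  unfold EfunDeriv pairTerm
  rw [sum_Icc_one_two_mul]
  congr 1
  refine sum_congr rfl fun m _ => ?_
  push_cast
  ring

theorem pairTerm_nonneg (m : ℕ) {u : ℝ} (hu : 0 < u) : 0 ≤ pairTerm m u := by
  unfold pairTerm; positivity

theorem pairTerm_lt_neg_one (m : ℕ) {a : ℝ} (ha₁ : -1 < a) (ha₀ : a < 0) : pairTerm m a < -1 := by
  obtain ⟨s, rfl⟩ : ∃ s, a = -s := ⟨-a, by ring⟩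
  have hs : 0 < s := by linarith
  have hs1 : s ^ (2 * m + 3) < 1 := pow_lt_one₀ hs.le (by linarith) (by omega)
  have heven : (-s) ^ (2 * m + 2) = s ^ (2 * m + 2) := Even.neg_pow ⟨m + 1, by ring⟩ s
  have hodd : (-s) ^ (2 * m + 3) = -s ^ (2 * m + 3) := Odd.neg_pow ⟨m + 1, by ring⟩ s
  have hp : 0 < s ^ (2 * m + 2) := pow_pos hs _
  have hsplit : s ^ (2 * m + 3) = s ^ (2 * m + 2) * s := pow_succ s _
  have hbracket : 0 < (2 * m + 2) - (2 * m + 1) * s - s ^ (2 * m + 2) * s := by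
    rw [← hsplit]; nlinarith [(Nat.cast_nonneg m : (0 : ℝ) ≤ m)]
  unfold pairTerm
  rw [heven, hodd, div_neg, ← sub_eq_add_neg, hsplit, div_sub_div _ _ hp.ne' (by positivity),
    div_lt_iff₀ (by positivity)]
  nlinarith [mul_pos hp hbracket]

theorem mul_pairTerm_le_one (m : ℕ) {x u : ℝ} (hx : 0 ≤ x) (hu : 1 + x ≤ u) :
    x * pairTerm m u ≤ 1 := by
  have hu1 : 1 ≤ u := by linarith
  have hpow : 0 < u ^ (2 * m + 2) := by positivity
  have hdecr : (2 * m + 2) / u ^ (2 * m + 3) ≤ (2 * m + 2) / u ^ (2 * m + 2) :=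
    div_le_div_of_nonneg_left (by positivity) hpow (pow_le_pow_right₀ hu1 (by omega))
  have hbern : (4 * m + 3) * x ≤ u ^ (2 * m + 2) := calc
    (4 * m + 3) * x = (2 * ((2 * m + 2 : ℕ) : ℝ) - 1) * x := by push_cast; ring
    _ ≤ (1 + x) ^ (2 * m + 2) := two_mul_sub_one_mul_le_one_add_pow hx (by omega)
    _ ≤ u ^ (2 * m + 2) := pow_le_pow_left₀ (by linarith) hu _
  calc x * pairTerm m u ≤ x * ((4 * m + 3) / u ^ (2 * m + 2)) := by
        refine mul_le_mul_of_nonneg_left ?_ hx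
        have hsplit : (4 * m + 3 : ℝ) / u ^ (2 * m + 2) =
            (2 * m + 1) / u ^ (2 * m + 2) + (2 * m + 2) / u ^ (2 * m + 2) := by ring
        rw [pairTerm, hsplit]
        linarith
    _ = (4 * m + 3) * x / u ^ (2 * m + 2) := by ring
    _ ≤ 1 := (div_le_one hpow).2 hbern

theorem EfunDeriv_nonpos (k : ℕ) {u : ℝ} (hu : 0 < u) : EfunDeriv k u ≤ 0 := by
  rw [EfunDeriv_eq_neg_sum_pairTerm, neg_nonpos]
  exact sum_nonneg fun m _ => pairTerm_nonneg m hu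

theorem lt_EfunDeriv {k : ℕ} (hk : 1 ≤ k) {a : ℝ} (ha₁ : -1 < a) (ha₀ : a < 0) :
    (k : ℝ) < EfunDeriv k a := by
  rw [EfunDeriv_eq_neg_sum_pairTerm, lt_neg]
  calc ∑ m ∈ range k, pairTerm m a < ∑ m ∈ range k, (-1 : ℝ) :=
        sum_lt_sum_of_nonempty (nonempty_range_iff.2 (by omega))
          fun m _ => pairTerm_lt_neg_one m ha₁ ha₀
    _ = -k := by simp

theorem neg_le_mul_EfunDeriv (k : ℕ) {x u : ℝ} (hx : 0 ≤ x) (hu : 1 + x ≤ u) :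
    -(k : ℝ) ≤ x * EfunDeriv k u := by
  rw [EfunDeriv_eq_neg_sum_pairTerm, mul_neg, neg_le_neg_iff, mul_sum]
  calc ∑ m ∈ range k, x * pairTerm m u ≤ ∑ m ∈ range k, (1 : ℝ) :=
        sum_le_sum fun m _ => mul_pairTerm_le_one m hx hu
    _ = k := by simp

theorem lt_two_and_mul_lt_one_of_mem_Ioo {κ t : ℝ} (ht : t ∈ Set.Ioo 1 (2 / (1 + max κ 0))) :
    t < 2 ∧ κ * t < 1 := by
  obtain ⟨ht₁, ht₂⟩ := ht
  rw [lt_div_iff₀ (by positivity)] at ht₂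
  have : κ * t ≤ max κ 0 * t := mul_le_mul_of_nonneg_right (le_max_left κ 0) (by linarith)
  constructor <;> nlinarith [le_max_right κ 0]

theorem Tfun_strictMonoOn_general (κ : ℝ) (k : ℕ) (hk : 1 ≤ k) :
    StrictMonoOn (fun t => Tfun k t κ) (Set.Ioo 1 (2 / (1 + max κ 0))) := by
  have hderiv : ∀ t ∈ Set.Ioo 1 (2 / (1 + max κ 0)), HasDerivAt (fun t => Tfun k t κ)
      (EfunDeriv k (1 - t) - κ * EfunDeriv k (1 - κ * t)) t := fun t ht => by
    obtain ⟨-, hκt⟩ := lt_two_and_mul_lt_one_of_mem_Ioo ht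
    exact hasDerivAt_Tfun k (by linarith) (by linarith [ht.1])
  refine strictMonoOn_of_hasDerivWithinAt_pos (convex_Ioo _ _)
    (f' := fun t => EfunDeriv k (1 - t) - κ * EfunDeriv k (1 - κ * t))
    (fun t ht => (hderiv t ht).continuousAt.continuousWithinAt) ?_ ?_ <;> rw [interior_Ioo]
  · exact fun t ht => (hderiv t ht).hasDerivWithinAt
  · intro t ht
    obtain ⟨ht₂, hκt⟩ := lt_two_and_mul_lt_one_of_mem_Ioo ht
    have hlt : (k : ℝ) < EfunDeriv k (1 - t) := lt_EfunDeriv hk (by linarith) (by linarith [ht.1])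
    rcases le_or_gt 0 κ with hκ | hκ
    · nlinarith [EfunDeriv_nonpos k (u := 1 - κ * t) (by linarith)]
    · have hge : -(k : ℝ) ≤ -κ * EfunDeriv k (1 - κ * t) :=
        neg_le_mul_EfunDeriv k (by linarith) (by nlinarith [ht.1])
      linarith

/-- **Strict monotonicity of `T_k` in the stepsize (Proposition 1 /
`prop:monotonicity_Tk`).** For every `κ < 1` and integer `k ≥ 1`, the function
`t ↦ T_k(t,κ)` is strictly increasing on `(1, 2/(1 + [κ]₊))`. -/
theorem Tfun_strictMonoOn (κ : ℝ) (hκ : κ < 1) (k : ℕ) (hk : 1 ≤ k) :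
    StrictMonoOn (fun t => Tfun k t κ) (Set.Ioo 1 (2 / (1 + max κ 0))) :=
  Tfun_strictMonoOn_general κ k hk
end

section
/- Let κ < 0. Then the cubic equation −κ(1+κ)t³ + (3κ + (1+κ)²)t² − 4(1+κ)t + 4 = 0 has a unique solution t* in the interval [1, 2). Moreover, t* is the unique maximizer over (0, 2) of the function t ↦ t · p(t, κt), where p(l,u) := 2 − (−l·u)/((1−u) − |1−l|). -/
open Set

noncomputable section

namespace OptimalStepsize

def stepGain (κ s : ℝ) : ℝ := s * pcoef s (κ * s)

def stepCubic (κ t : ℝ) : ℝ :=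
  -κ * (1 + κ) * t ^ 3 + (3 * κ + (1 + κ) ^ 2) * t ^ 2 - 4 * (1 + κ) * t + 4

variable {κ s t : ℝ}

lemma stepCubic_one : stepCubic κ 1 = 1 := by
  unfold stepCubic; ring

lemma stepCubic_two : stepCubic κ 2 = 4 * κ * (1 - κ) := by
  unfold stepCubic; ring

lemma exists_stepCubic_eq_zero (hκ : κ < 0) : ∃ t ∈ Ioo 1 2, stepCubic κ t = 0 := by
  have hcont : ContinuousOn (stepCubic κ) (Icc 1 2) := by
    unfold stepCubic; fun_prop
  have hsign : (0 : ℝ) ∈ Ioo (stepCubic κ 2) (stepCubic κ 1) := by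
    rw [stepCubic_one, stepCubic_two]
    constructor <;> nlinarith
  exact intermediate_value_Ioo' one_le_two hcont hsign

lemma stepGain_of_le_one (hs0 : 0 < s) (hs1 : s ≤ 1) (hκ : κ < 1) :
    stepGain κ s = 2 * s + κ * s ^ 2 / (1 - κ) := by
  have hden : (1 - κ * s) - |1 - s| = s * (1 - κ) := by
    rw [abs_of_nonneg (sub_nonneg.mpr hs1)]; ring
  have hκ' : 1 - κ ≠ 0 := by linarith
  unfold stepGain pcoef
  rw [hden]
  field_simp
  ring

lemma stepGain_of_one_le (hs1 : 1 ≤ s) (hD : 2 - (1 + κ) * s ≠ 0) :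
    stepGain κ s = s * (2 - s) * (2 - κ * s) / (2 - (1 + κ) * s) := by
  have hden : (1 - κ * s) - |1 - s| = 2 - (1 + κ) * s := by
    rw [abs_of_nonpos (sub_nonpos.mpr hs1)]; ring
  unfold stepGain pcoef
  rw [hden, eq_div_iff hD]
  linear_combination (-s) * div_mul_cancel₀ (-(s * (κ * s))) hD

lemma stepDenom_pos (hκ : κ ≤ 0) (hs0 : 0 ≤ s) (hs2 : s < 2) : 0 < 2 - (1 + κ) * s := by
  nlinarith

lemma stepGain_le_stepGain_one (hκ : κ < 1) (hs0 : 0 < s) (hs1 : s ≤ 1) :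
    stepGain κ s ≤ stepGain κ 1 := by
  rw [stepGain_of_le_one hs0 hs1 hκ, stepGain_of_le_one one_pos le_rfl hκ]
  have hκ' : 0 < 1 - κ := by linarith
  have hgap : 0 ≤ (1 - s) * (2 - κ * (1 - s)) := by
    apply mul_nonneg <;> nlinarith
  rw [← sub_nonneg]
  have : 2 * 1 + κ * 1 ^ 2 / (1 - κ) - (2 * s + κ * s ^ 2 / (1 - κ))
      = (1 - s) * (2 - κ * (1 - s)) / (1 - κ) := by
    field_simp; ring
  rw [this]
  positivity

lemma stepGain_lt_of_stepCubic_eq_zero (hκ : κ ≤ 0) (ht1 : 1 ≤ t) (ht2 : t < 2)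
    (hC : stepCubic κ t = 0) (hs1 : 1 ≤ s) (hs2 : s < 2) (hst : s ≠ t) :
    stepGain κ s < stepGain κ t := by
  have hDs := stepDenom_pos hκ (by linarith) hs2
  have hDt := stepDenom_pos hκ (by linarith) ht2
  rw [stepGain_of_one_le hs1 hDs.ne', stepGain_of_one_le ht1 hDt.ne', div_lt_div_iff₀ hDs hDt]
  have hNt : 0 < t * (2 - t) * (2 - κ * t) := by
    have : 0 < 2 - t := by linarith
    have : 0 < 2 - κ * t := by nlinarith
    positivity
  -- `m·D(s) - N(s) = (s-t)²(-κs + 2m/t²)` with `m = N(t)/D(t)`, cleared of denominators.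
  have hfactor : t ^ 2 * (t * (2 - t) * (2 - κ * t) * (2 - (1 + κ) * s)
        - s * (2 - s) * (2 - κ * s) * (2 - (1 + κ) * t))
      = (s - t) ^ 2 * (-κ * s * t ^ 2 * (2 - (1 + κ) * t) + 2 * (t * (2 - t) * (2 - κ * t))) := by
    unfold stepCubic at hC
    linear_combination (2 * t ^ 2 * s - 2 * t * s ^ 2) * hC
  have hpos : 0 < (s - t) ^ 2 * (-κ * s * t ^ 2 * (2 - (1 + κ) * t)
      + 2 * (t * (2 - t) * (2 - κ * t))) := by
    have : 0 ≤ -κ * s * t ^ 2 * (2 - (1 + κ) * t) := by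
      have : 0 ≤ -κ := by linarith
      have : 0 ≤ s := by linarith
      positivity
    have : 0 < (s - t) ^ 2 := by positivity [sub_ne_zero.mpr hst]
    positivity
  nlinarith

lemma stepGain_lt_of_isRoot (hκ : κ ≤ 0) (ht : t ∈ Ico 1 2) (hC : stepCubic κ t = 0)
    (hs : s ∈ Ioo 0 2) (hst : s ≠ t) : stepGain κ s < stepGain κ t := by
  rcases lt_or_ge s 1 with hs1 | hs1
  · have ht1 : (1 : ℝ) ≠ t := by
      rintro rfl
      simp [stepCubic_one] at hC
    calc stepGain κ s ≤ stepGain κ 1 := stepGain_le_stepGain_one (by linarith) hs.1 hs1.le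
      _ < stepGain κ t :=
        stepGain_lt_of_stepCubic_eq_zero hκ ht.1 ht.2 hC le_rfl one_lt_two ht1
  · exact stepGain_lt_of_stepCubic_eq_zero hκ ht.1 ht.2 hC hs1 hs.2 hst

end OptimalStepsize

end

open OptimalStepsize in
/-- **Optimal constant stepsize for nonconvex functions (Proposition 4 /
`prop:gamma_star`).** For `κ < 0` the cubic
`−κ(1+κ)t³ + (3κ+(1+κ)²)t² − 4(1+κ)t + 4 = 0` has a unique solution `t*` in `[1,2)`,
and `t*` is the unique maximizer of `t ↦ t·p(t, κt)` over `(0,2)`. -/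
theorem optimal_nonconvex_stepsize (κ : ℝ) (hκ : κ < 0) :
    (∃! t : ℝ, t ∈ Set.Ico (1 : ℝ) 2 ∧
      -κ * (1 + κ) * t ^ 3 + (3 * κ + (1 + κ) ^ 2) * t ^ 2 - 4 * (1 + κ) * t + 4 = 0) ∧
    (∀ t : ℝ, t ∈ Set.Ico (1 : ℝ) 2 →
      -κ * (1 + κ) * t ^ 3 + (3 * κ + (1 + κ) ^ 2) * t ^ 2 - 4 * (1 + κ) * t + 4 = 0 →
      ∀ s ∈ Set.Ioo (0 : ℝ) 2, s ≠ t → s * pcoef s (κ * s) < t * pcoef t (κ * t)) := by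
  have isMax : ∀ t ∈ Ico 1 2, stepCubic κ t = 0 →
      ∀ s ∈ Ioo 0 2, s ≠ t → stepGain κ s < stepGain κ t :=
    fun t ht hC s hs hst => stepGain_lt_of_isRoot hκ.le ht hC hs hst
  obtain ⟨t₀, ht₀, hC₀⟩ := exists_stepCubic_eq_zero hκ
  refine ⟨⟨t₀, ⟨Ioo_subset_Ico_self ht₀, hC₀⟩, fun s ⟨hs, hCs⟩ => ?_⟩, isMax⟩
  by_contra hne
  exact lt_asymm (isMax t₀ (Ioo_subset_Ico_self ht₀) hC₀ s ⟨by linarith [hs.1], hs.2⟩ hne)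
    (isMax s hs hCs t₀ ⟨by linarith [ht₀.1], ht₀.2⟩ (Ne.symm hne))
end

section
/- Let L > 0, μ ∈ [0, L), κ := μ/L, and let f : E → ℝ be a differentiable function on a real inner product space E with f ∈ F_{μ,L} and f_* := inf_x f(x) > −∞. Let (s_k)_{k≥−1} be a sequence of reals with s_{−1} = 0 and, for each k ≥ −1, s_{k+1} ∈ [1, 2/(1+κ)) satisfying s_{k+1}·[(2−s_{k+1})(2−κ·s_{k+1}) − 1]/(2 − s_{k+1}(1+κ)) + s_k/(2 − s_k(1+κ)) = 0. Fix an integer N ≥ 1 and run gradient descent x_{i+1} = x_i − (s_i/L)·∇f(x_i) for i = 0,…,N−1. Then (1/(2L))·‖∇f(x_N)‖² ≤ (f(x_0) − f_*) / ( 1 + s_{N−1}/(2 − s_{N−1}(1+κ)) ). -/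
open Set InnerProductSpace
open scoped RealInnerProductSpace Gradient

/-!
With `τ(s) = s / (2 - s(1 + κ))`, the potential `f(x_k) + τ(s_k) ‖∇f(x_k)‖² / (2L)` does not
increase along the iteration. Indeed, adding the `F_{μ,L}` interpolation inequalities between
`x_k` and `x_{k+1}` (in both orders) with weights `λ` and `λ + 1`, where
`λ = (s_{k+1} - 1) / (2 - s_{k+1}(1 + κ)) ≥ 0`, bounds `f(x_{k+1}) + τ(s_{k+1}) ‖∇f(x_{k+1})‖²/(2L)`
by `f(x_k)` plus a multiple of `‖∇f(x_k)‖²` whose coefficient is `-τ(s_k)/(2L)` exactly by the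
stepsize recursion. As `τ(s_{-1}) = 0`, the potential at `x_N` is at most `f(x_0)`, and a further
step of length `1/L` from `x_N` gives `f_* ≤ f(x_N) - ‖∇f(x_N)‖² / (2L)`.
-/

theorem ConvexOn.add_fderiv_sub_le {E : Type*} [NormedAddCommGroup E] [NormedSpace ℝ E]
    {φ : E → ℝ} (hφ : ConvexOn ℝ univ φ) {a : E} {D : E →L[ℝ] ℝ} (hD : HasFDerivAt φ D a)
    (b : E) : φ a + D (b - a) ≤ φ b := by
  have hline : ConvexOn ℝ univ (φ ∘ AffineMap.lineMap (k := ℝ) a b) := by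
    simpa using hφ.comp_affineMap (AffineMap.lineMap (k := ℝ) a b)
  have hderiv : HasDerivAt (φ ∘ AffineMap.lineMap (k := ℝ) a b) (D (b - a)) 0 :=
    (by simpa using hD : HasFDerivAt φ D (AffineMap.lineMap a b (0 : ℝ))).comp_hasDerivAt 0
      AffineMap.hasDerivAt_lineMap
  have hslope := hline.le_slope_of_hasDerivAt (mem_univ 0) (mem_univ 1) one_pos hderiv
  simp only [slope_def_field, Function.comp_apply, AffineMap.lineMap_apply_zero,
    AffineMap.lineMap_apply_one, sub_zero, div_one] at hslope
  linarith

theorem StrongConvexOn.add_fderiv_sub_add_sq_le {E : Type*} [NormedAddCommGroup E]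
    [InnerProductSpace ℝ E] {f : E → ℝ} {m : ℝ} (hf : StrongConvexOn univ m f) {a : E}
    {D : E →L[ℝ] ℝ} (hD : HasFDerivAt f D a) (b : E) :
    f a + D (b - a) + m / 2 * ‖b - a‖ ^ 2 ≤ f b := by
  have hq := (hasStrictFDerivAt_norm_sq a).hasFDerivAt.const_mul (m / 2)
  have h := (strongConvexOn_iff_convex.mp hf).add_fderiv_sub_le (hD.sub hq) b
  have hnorm : ‖b‖ ^ 2 = ‖a‖ ^ 2 + 2 * ⟪a, b - a⟫ + ‖b - a‖ ^ 2 := by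
    simpa using norm_add_sq_real a (b - a)
  simp only [sub_apply, smul_apply, coe_innerSL_apply, nsmul_eq_mul, Nat.cast_ofNat,
    smul_eq_mul, hnorm] at h
  linarith

noncomputable def stepWeight (κ s : ℝ) : ℝ := s / (2 - s * (1 + κ))

theorem mul_one_add_lt_two_of_mem_Ico {κ s : ℝ} (hs : s ∈ Ico 1 (2 / (1 + κ))) :
    s * (1 + κ) < 2 := by
  have hκ : 0 < 1 + κ := (div_pos_iff_of_pos_left two_pos).mp (by linarith [hs.1, hs.2])
  exact (lt_div_iff₀ hκ).mp hs.2

theorem stepWeight_nonneg {κ s : ℝ} (hs : 0 ≤ s) (hsκ : s * (1 + κ) < 2) :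
    0 ≤ stepWeight κ s :=
  div_nonneg hs (by linarith)

theorem potential_step_le_of_interpolation {L μ κ s a b c f₀ f₁ : ℝ} (hL : 0 < L) (hμL : μ < L)
    (hκ : κ = μ / L) (hs : 1 ≤ s) (hsκ : s * (1 + κ) < 2)
    (h₁ : f₀ - s / L * a + μ / 2 * ((s / L) ^ 2 * a) +
      (b - 2 * (1 - κ * s) * c + (1 - κ * s) ^ 2 * a) / (2 * (L - μ)) ≤ f₁)
    (h₂ : f₁ + s / L * c + μ / 2 * ((s / L) ^ 2 * a) +
      (b - 2 * (1 - κ * s) * c + (1 - κ * s) ^ 2 * a) / (2 * (L - μ)) ≤ f₀) :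
    f₁ + stepWeight κ s * (b / (2 * L)) +
      s * ((2 - s) * (2 - κ * s) - 1) / (2 - s * (1 + κ)) * (a / (2 * L)) ≤ f₀ := by
  have hden : 0 < 2 - s * (1 + κ) := by linarith
  have hκ1 : 1 - κ ≠ 0 := by
    have : κ < 1 := hκ ▸ (div_lt_one hL).mpr hμL
    linarith
  set lam := (s - 1) / (2 - s * (1 + κ))
  have hlam : 0 ≤ lam := div_nonneg (by linarith) hden.le
  obtain rfl : μ = κ * L := by rw [hκ]; field_simp
  have key : f₀ - (f₁ + stepWeight κ s * (b / (2 * L)) +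
        s * ((2 - s) * (2 - κ * s) - 1) / (2 - s * (1 + κ)) * (a / (2 * L))) =
      lam * (f₁ - (f₀ - s / L * a + κ * L / 2 * ((s / L) ^ 2 * a) +
        (b - 2 * (1 - κ * s) * c + (1 - κ * s) ^ 2 * a) / (2 * (L - κ * L)))) +
      (lam + 1) * (f₀ - (f₁ + s / L * c + κ * L / 2 * ((s / L) ^ 2 * a) +
        (b - 2 * (1 - κ * s) * c + (1 - κ * s) ^ 2 * a) / (2 * (L - κ * L)))) := by
    simp only [lam, stepWeight]
    field_simp
    ring
  linarith [mul_nonneg hlam (sub_nonneg.2 h₁), mul_nonneg (by linarith : 0 ≤ lam + 1) (sub_nonneg.2 h₂)]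

section SmoothStronglyConvex

variable {E : Type*} [NormedAddCommGroup E] [InnerProductSpace ℝ E] [CompleteSpace E]
  {f : E → ℝ} {L μ : ℝ}

theorem add_inner_gradient_add_sq_le (hf : Differentiable ℝ f)
    (hcurv : ConvexOn ℝ univ fun z => f z - μ / 2 * ‖z‖ ^ 2) (a b : E) :
    f a + ⟪∇ f a, b - a⟫ + μ / 2 * ‖b - a‖ ^ 2 ≤ f b := by
  simpa using (strongConvexOn_iff_convex.mpr hcurv).add_fderiv_sub_add_sq_le
    (hf a).hasGradientAt.hasFDerivAt b

theorem le_add_inner_gradient_add_sq (hf : Differentiable ℝ f)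
    (hsmooth : ConvexOn ℝ univ fun z => L / 2 * ‖z‖ ^ 2 - f z) (a b : E) :
    f b ≤ f a + ⟪∇ f a, b - a⟫ + L / 2 * ‖b - a‖ ^ 2 := by
  have hneg : StrongConvexOn univ (-L) (-f) :=
    strongConvexOn_iff_convex.mpr (by convert hsmooth using 2; simp only [Pi.neg_apply]; ring)
  have := hneg.add_fderiv_sub_add_sq_le (hf a).hasGradientAt.hasFDerivAt.neg b
  simp only [Pi.neg_apply, neg_apply, toDual_apply_apply] at this
  linarith

theorem iInf_add_norm_gradient_sq_div_le (hL : 0 < L) (hf : Differentiable ℝ f)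
    (hsmooth : ConvexOn ℝ univ fun z => L / 2 * ‖z‖ ^ 2 - f z) (hbdd : BddBelow (range f))
    (x : E) : (⨅ y, f y) + ‖∇ f x‖ ^ 2 / (2 * L) ≤ f x := by
  have hdesc := le_add_inner_gradient_add_sq hf hsmooth x (x - L⁻¹ • ∇ f x)
  have hstep : ⟪∇ f x, x - L⁻¹ • ∇ f x - x⟫ + L / 2 * ‖x - L⁻¹ • ∇ f x - x‖ ^ 2
      = -(‖∇ f x‖ ^ 2 / (2 * L)) := by
    rw [sub_sub_cancel_left, inner_neg_right, real_inner_smul_right, real_inner_self_eq_norm_sq,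
      norm_neg, norm_smul, mul_pow, Real.norm_eq_abs, sq_abs]
    field_simp
    ring
  linarith [ciInf_le hbdd (x - L⁻¹ • ∇ f x)]

theorem smooth_strongConvex_interpolation (hμL : μ < L) (hf : Differentiable ℝ f)
    (hsmooth : ConvexOn ℝ univ fun z => L / 2 * ‖z‖ ^ 2 - f z)
    (hcurv : ConvexOn ℝ univ fun z => f z - μ / 2 * ‖z‖ ^ 2) (u v : E) :
    f v + ⟪∇ f v, u - v⟫ + μ / 2 * ‖u - v‖ ^ 2 +
      ‖∇ f u - ∇ f v - μ • (u - v)‖ ^ 2 / (2 * (L - μ)) ≤ f u := by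
  set e := ∇ f u - ∇ f v - μ • (u - v)
  set c := (L - μ)⁻¹
  have hlower := add_inner_gradient_add_sq_le hf hcurv v (u - c • e)
  have hupper := le_add_inner_gradient_add_sq hf hsmooth u (u - c • e)
  have he : ⟪∇ f u, e⟫ = ‖e‖ ^ 2 + ⟪∇ f v, e⟫ + μ * ⟪u - v, e⟫ := by
    rw [← real_inner_self_eq_norm_sq]
    simp only [e, inner_sub_left, real_inner_smul_left]
    ring
  rw [show u - c • e - v = (u - v) - c • e by abel] at hlower
  rw [sub_sub_cancel_left] at hupper
  simp only [inner_sub_right, inner_neg_right, real_inner_smul_right, norm_sub_sq_real, norm_neg,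
    norm_smul, Real.norm_eq_abs, mul_pow, sq_abs] at hlower hupper ⊢
  have hgap : ‖e‖ ^ 2 / (2 * (L - μ)) = c * ‖e‖ ^ 2 - (L - μ) / 2 * (c ^ 2 * ‖e‖ ^ 2) := by
    have hLμ : L - μ ≠ 0 := sub_ne_zero.mpr hμL.ne'
    simp only [c]
    field_simp
    ring
  rw [he] at hupper
  linarith

theorem potential_gradient_step_le {κ s : ℝ} (hL : 0 < L) (hμL : μ < L) (hκ : κ = μ / L)
    (hf : Differentiable ℝ f) (hsmooth : ConvexOn ℝ univ fun z => L / 2 * ‖z‖ ^ 2 - f z)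
    (hcurv : ConvexOn ℝ univ fun z => f z - μ / 2 * ‖z‖ ^ 2) (hs : 1 ≤ s)
    (hsκ : s * (1 + κ) < 2) (x : E) :
    f (x - (s / L) • ∇ f x) + stepWeight κ s * (‖∇ f (x - (s / L) • ∇ f x)‖ ^ 2 / (2 * L)) +
      s * ((2 - s) * (2 - κ * s) - 1) / (2 - s * (1 + κ)) * (‖∇ f x‖ ^ 2 / (2 * L)) ≤ f x := by
  set y := x - (s / L) • ∇ f x
  have h₁ := smooth_strongConvex_interpolation hμL hf hsmooth hcurv y x
  have h₂ := smooth_strongConvex_interpolation hμL hf hsmooth hcurv x y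
  set g := ∇ f x
  set g' := ∇ f y
  have hyx : y - x = -((s / L) • g) := sub_sub_cancel_left _ _
  have hxy : x - y = (s / L) • g := sub_sub_cancel _ _
  have hμs : μ * (s / L) = κ * s := by rw [hκ]; ring
  have hres₁ : g' - g - μ • (y - x) = g' - (1 - κ * s) • g := by
    rw [hyx, smul_neg, smul_smul, hμs, sub_smul, one_smul]; abel
  have hres₂ : g - g' - μ • (x - y) = -(g' - (1 - κ * s) • g) := by
    rw [hxy, smul_smul, hμs, sub_smul, one_smul]; abel
  have hQ : ‖g' - (1 - κ * s) • g‖ ^ 2 =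
      ‖g'‖ ^ 2 - 2 * (1 - κ * s) * ⟪g', g⟫ + (1 - κ * s) ^ 2 * ‖g‖ ^ 2 := by
    rw [norm_sub_sq_real, real_inner_smul_right, norm_smul, Real.norm_eq_abs, mul_pow, sq_abs]
    ring
  rw [hres₁, hQ, hyx] at h₁
  rw [hres₂, norm_neg, hQ, hxy] at h₂
  simp only [inner_neg_right, real_inner_smul_right, real_inner_self_eq_norm_sq, norm_neg,
    norm_smul, Real.norm_eq_abs, mul_pow, sq_abs] at h₁ h₂
  exact potential_step_le_of_interpolation hL hμL hκ hs hsκ (c := ⟪g', g⟫) (by linarith) (by linarith)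

end SmoothStronglyConvex

theorem gd_dynamic_stepsizes_strongly_convex_rate_general
    {E : Type*} [NormedAddCommGroup E] [InnerProductSpace ℝ E] [CompleteSpace E]
    (L μ : ℝ) (hL : 0 < L) (hμL : μ < L)
    (κ : ℝ) (hκ : κ = μ / L)
    (f : E → ℝ) (hdiff : Differentiable ℝ f)
    (hsmooth : ConvexOn ℝ Set.univ (fun z => L / 2 * ‖z‖ ^ 2 - f z))
    (hcurv : ConvexOn ℝ Set.univ (fun z => f z - μ / 2 * ‖z‖ ^ 2))
    (hbdd : BddBelow (Set.range f))
    (s : ℕ → ℝ) (hs0 : s 0 = 0)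
    (hrec : ∀ k : ℕ,
      s (k + 1) ∈ Set.Ico (1 : ℝ) (2 / (1 + κ)) ∧
      s (k + 1) * ((2 - s (k + 1)) * (2 - κ * s (k + 1)) - 1) /
          (2 - s (k + 1) * (1 + κ)) +
        s k / (2 - s k * (1 + κ)) = 0)
    (N : ℕ)
    (x : ℕ → E) (hx : ∀ i < N, x (i + 1) = x i - (s (i + 1) / L) • gradient f (x i)) :
    1 / (2 * L) * ‖gradient f (x N)‖ ^ 2 ≤
      (f (x 0) - ⨅ y, f y) / (1 + s N / (2 - s N * (1 + κ))) := by
  have hpotential : ∀ k ≤ N,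
      f (x k) + stepWeight κ (s k) * (‖∇ f (x k)‖ ^ 2 / (2 * L)) ≤ f (x 0) := by
    intro k hk
    induction k with
    | zero => simp [stepWeight, hs0]
    | succ k ih =>
      obtain ⟨hs, hrec_k⟩ := hrec k
      have hcoef : s (k + 1) * ((2 - s (k + 1)) * (2 - κ * s (k + 1)) - 1) /
          (2 - s (k + 1) * (1 + κ)) = -stepWeight κ (s k) := eq_neg_of_add_eq_zero_left hrec_k
      have hstep := potential_gradient_step_le hL hμL hκ hdiff hsmooth hcurv hs.1
        (mul_one_add_lt_two_of_mem_Ico hs) (x k)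
      rw [hcoef, ← hx k hk] at hstep
      linarith [ih (by omega)]
  have hfinal := iInf_add_norm_gradient_sq_div_le hL hdiff hsmooth hbdd (x N)
  change _ ≤ _ / (1 + stepWeight κ (s N))
  have hweight : 0 ≤ stepWeight κ (s N) := by
    cases N with
    | zero => simp [stepWeight, hs0]
    | succ k =>
      exact stepWeight_nonneg (zero_le_one.trans (hrec k).1.1)
        (mul_one_add_lt_two_of_mem_Ico (hrec k).1)
  rw [le_div_iff₀ (by linarith)]
  have hsplit : 1 / (2 * L) * ‖∇ f (x N)‖ ^ 2 * (1 + stepWeight κ (s N)) =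
      ‖∇ f (x N)‖ ^ 2 / (2 * L) + stepWeight κ (s N) * (‖∇ f (x N)‖ ^ 2 / (2 * L)) := by ring
  linarith [hpotential N le_rfl]

/-- **Rate of gradient descent with the dynamic stepsize schedule on smooth (strongly)
convex functions (Theorem 7 / `thm:convergence_rates_strg_convex_variable_stepsizes`).**
Let `0 ≤ μ < L`, `κ = μ/L`, `f ∈ F_{μ,L}` bounded below. Let `(s_k)_{k ≥ -1}` (encoded
with shifted index, `s 0 = s_{-1} = 0`) be the dynamic stepsize sequence: each
`s_{k+1} ∈ [1, 2/(1+κ))` solves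
`s[(2−s)(2−κs)−1]/(2−s(1+κ)) + s_k/(2−s_k(1+κ)) = 0`.
Run `N ≥ 1` steps of gradient descent with stepsizes `γ_i = s_i/L`. Then
`(1/(2L))‖∇f(x_N)‖² ≤ (f(x₀) − f_*)/(1 + s_{N−1}/(2 − s_{N−1}(1+κ)))`. -/
theorem gd_dynamic_stepsizes_strongly_convex_rate
    {E : Type*} [NormedAddCommGroup E] [InnerProductSpace ℝ E] [CompleteSpace E]
    (L μ : ℝ) (hL : 0 < L) (hμ : 0 ≤ μ) (hμL : μ < L)
    (κ : ℝ) (hκ : κ = μ / L)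
    (f : E → ℝ) (hdiff : Differentiable ℝ f)
    (hsmooth : ConvexOn ℝ Set.univ (fun z => L / 2 * ‖z‖ ^ 2 - f z))
    (hcurv : ConvexOn ℝ Set.univ (fun z => f z - μ / 2 * ‖z‖ ^ 2))
    (hbdd : BddBelow (Set.range f))
    (s : ℕ → ℝ) (hs0 : s 0 = 0)
    (hrec : ∀ k : ℕ,
      s (k + 1) ∈ Set.Ico (1 : ℝ) (2 / (1 + κ)) ∧
      s (k + 1) * ((2 - s (k + 1)) * (2 - κ * s (k + 1)) - 1) /
          (2 - s (k + 1) * (1 + κ)) +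
        s k / (2 - s k * (1 + κ)) = 0)
    (N : ℕ) (hN : 1 ≤ N)
    (x : ℕ → E) (hx : ∀ i < N, x (i + 1) = x i - (s (i + 1) / L) • gradient f (x i)) :
    1 / (2 * L) * ‖gradient f (x N)‖ ^ 2 ≤
      (f (x 0) - ⨅ y, f y) / (1 + s N / (2 - s N * (1 + κ))) :=
  gd_dynamic_stepsizes_strongly_convex_rate_general L μ hL hμL κ hκ f hdiff hsmooth hcurv hbdd s hs0
    hrec N x hx
end

section
/- Let L > 0 and let f : E → ℝ be a differentiable function on a real inner product space E with f convex and x ↦ (L/2)‖x‖² − f(x) convex (f ∈ F_{0,L}), and assume f_* := inf_x f(x) > −∞. Define s_{−1} := 0 and s_i := (3 − 2 s_{i−1} + √(9 − 4 s_{i−1})) / (2(2 − s_{i−1})) for i ≥ 0. Fix an integer N ≥ 1 and run gradient descent x_{i+1} = x_i − (s_i/L)·∇f(x_i) for i = 0,…,N−1. Then (1/(2L))·‖∇f(x_N)‖² ≤ (f(x_0) − f_*) / ( 1 + s_{N−1}/(2 − s_{N−1}) ). -/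
/-!
Along the iteration the potential `s i ‖∇f (x i)‖² ≤ (2 - s i) · 2L (f (x 0) - f (x i))` is
preserved. Adding the cocoercivity inequalities between consecutive iterates `x, x'`, with
weights `1` and `t - 1`, shows that a step of length `t / L` with `t ≥ 1` gives
`t ‖∇f x'‖² ≤ t (2t - 3) ‖∇f x‖² + (2 - t) · 2L (f x - f x')`, and the recursion is chosen so
that `(2 - σ) t (2t - 3) = σ (2 - t)`, which is exactly what carries the potential from `σ = s i`
to `t = s (i + 1)`. Finally `‖∇f (x N)‖² ≤ 2L (f (x N) - f_*)` by the descent lemma, and adding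
`2 - s N` times this to the potential at `N` gives the bound.
-/

open RealInnerProductSpace Set

/-- The larger root `t` of `(2 - σ) t² - (3 - 2σ) t - σ = 0`; the schedule is
`s (i + 1) = dynamicStepsize (s i)`. -/
noncomputable def dynamicStepsize (σ : ℝ) : ℝ :=
  (3 - 2 * σ + √(9 - 4 * σ)) / (2 * (2 - σ))

section dynamicStepsize

variable {σ : ℝ}

theorem one_le_dynamicStepsize (hσ : σ < 2) : 1 ≤ dynamicStepsize σ := by
  rw [dynamicStepsize, le_div_iff₀ (by linarith)]
  linarith [Real.one_le_sqrt.mpr (by linarith : (1 : ℝ) ≤ 9 - 4 * σ)]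

theorem dynamicStepsize_lt_two (hσ : σ < 2) : dynamicStepsize σ < 2 := by
  have hsq := Real.sq_sqrt (by linarith : (0 : ℝ) ≤ 9 - 4 * σ)
  rw [dynamicStepsize, div_lt_iff₀ (by linarith)]
  nlinarith [Real.sqrt_nonneg (9 - 4 * σ), sq_pos_of_pos (by linarith : (0 : ℝ) < 2 - σ)]

theorem dynamicStepsize_quadratic (hσ : σ < 2) :
    (2 - σ) * dynamicStepsize σ ^ 2 - (3 - 2 * σ) * dynamicStepsize σ - σ = 0 := by
  have hsq := Real.sq_sqrt (by linarith : (0 : ℝ) ≤ 9 - 4 * σ)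
  have hne : 2 - σ ≠ 0 := by linarith
  rw [dynamicStepsize]
  generalize √(9 - 4 * σ) = R at hsq ⊢
  field_simp
  linear_combination hsq

end dynamicStepsize

theorem lt_two_of_dynamicStepsize {s : ℕ → ℝ} (hs0 : s 0 = 0)
    (hrec : ∀ i, s (i + 1) = dynamicStepsize (s i)) (i : ℕ) : s i < 2 := by
  induction i with
  | zero => rw [hs0]; norm_num
  | succ i ih => rw [hrec]; exact dynamicStepsize_lt_two ih

theorem ConvexOn.add_le_of_hasFDerivAt {F : Type*} [NormedAddCommGroup F] [NormedSpace ℝ F]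
    {s : Set F} {φ : F → ℝ} {φ' : F →L[ℝ] ℝ} {u v : F}
    (hφ : ConvexOn ℝ s φ) (hu : u ∈ s) (hv : v ∈ s) (hd : HasFDerivAt φ φ' u) :
    φ u + φ' (v - u) ≤ φ v := by
  let ℓ : ℝ →ᵃ[ℝ] F := AffineMap.lineMap u v
  have hline : HasDerivAt (φ ∘ ℓ) (φ' (v - u)) 0 := by
    have := AffineMap.hasDerivAt_lineMap (a := u) (b := v) (x := (0 : ℝ))
    exact (by simpa [ℓ] using hd : HasFDerivAt φ φ' (ℓ 0)).comp_hasDerivAt 0 this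
  have hslope := (hφ.comp_affineMap ℓ).le_slope_of_hasDerivAt (x := 0) (y := 1)
    (by simpa [ℓ] using hu) (by simpa [ℓ] using hv) one_pos hline
  simp only [map_sub, slope_def_field, Function.comp_apply, AffineMap.lineMap_apply_one,
    AffineMap.lineMap_apply_zero, sub_zero, div_one, ℓ] at hslope
  rw [map_sub]
  linarith

section Gradient

variable {E : Type*} [NormedAddCommGroup E] [InnerProductSpace ℝ E] [CompleteSpace E]

theorem ConvexOn.add_inner_gradient_le {s : Set E} {f : E → ℝ} {u v : E}
    (hf : ConvexOn ℝ s f) (hu : u ∈ s) (hv : v ∈ s) (hd : DifferentiableAt ℝ f u) :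
    f u + ⟪gradient f u, v - u⟫ ≤ f v := by
  simpa [inner_gradient_left] using hf.add_le_of_hasFDerivAt hu hv hd.hasFDerivAt

theorem le_add_inner_gradient_add_norm_sub_sq {L : ℝ} {f : E → ℝ}
    (hf : Differentiable ℝ f) (hsmooth : ConvexOn ℝ univ (fun z => L / 2 * ‖z‖ ^ 2 - f z))
    (u v : E) :
    f v ≤ f u + ⟪gradient f u, v - u⟫ + L / 2 * ‖v - u‖ ^ 2 := by
  have hd : HasFDerivAt (fun z => L / 2 * ‖z‖ ^ 2 - f z)
      ((L / 2) • (2 • innerSL ℝ u) - fderiv ℝ f u) u :=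
    ((hasStrictFDerivAt_norm_sq u).hasFDerivAt.const_mul (L / 2)).sub (hf u).hasFDerivAt
  have key := hsmooth.add_le_of_hasFDerivAt (mem_univ u) (mem_univ v) hd
  simp only [sub_apply, smul_apply, innerSL_apply_apply,
    ← inner_gradient_left, smul_eq_mul, nsmul_eq_mul, Nat.cast_ofNat, inner_sub_right,
    real_inner_self_eq_norm_sq] at key
  rw [norm_sub_sq_real, real_inner_comm u v, inner_sub_right]
  linarith

theorem add_inner_gradient_add_norm_sub_sq_le {L : ℝ} (hL : 0 < L) {f : E → ℝ}
    (hf : Differentiable ℝ f) (hcvx : ConvexOn ℝ univ f)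
    (hsmooth : ConvexOn ℝ univ (fun z => L / 2 * ‖z‖ ^ 2 - f z)) (u v : E) :
    f v + ⟪gradient f v, u - v⟫ + 1 / (2 * L) * ‖gradient f u - gradient f v‖ ^ 2 ≤ f u := by
  set d := gradient f u - gradient f v
  -- `w` minimises the quadratic upper bound at `u` of `f - ⟪∇f v, ·⟫`
  set w := u - (1 / L) • d
  have hlow := hcvx.add_inner_gradient_le (mem_univ v) (mem_univ w) (hf v)
  have hup := le_add_inner_gradient_add_norm_sub_sq hf hsmooth u w
  have hwv : w - v = (u - v) - (1 / L) • d := by simp only [w]; abel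
  have hwu : w - u = -((1 / L) • d) := by simp only [w]; abel
  have hdd : 1 / L * ⟪gradient f u, d⟫ - 1 / L * ⟪gradient f v, d⟫ = 1 / L * ‖d‖ ^ 2 := by
    rw [← mul_sub, ← inner_sub_left, real_inner_self_eq_norm_sq]
  rw [hwv, inner_sub_right, real_inner_smul_right] at hlow
  rw [hwu, inner_neg_right, real_inner_smul_right, norm_neg, norm_smul, mul_pow,
    Real.norm_eq_abs, sq_abs] at hup
  have : 1 / (2 * L) * ‖d‖ ^ 2 = 1 / L * ‖d‖ ^ 2 - L / 2 * ((1 / L) ^ 2 * ‖d‖ ^ 2) := by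
    field_simp; ring
  linarith

theorem norm_gradient_sq_le_two_mul_sub_iInf {L : ℝ} (hL : 0 < L) {f : E → ℝ}
    (hf : Differentiable ℝ f) (hsmooth : ConvexOn ℝ univ (fun z => L / 2 * ‖z‖ ^ 2 - f z))
    (hbdd : BddBelow (range f)) (u : E) :
    ‖gradient f u‖ ^ 2 ≤ 2 * L * (f u - ⨅ y, f y) := by
  have hup := le_add_inner_gradient_add_norm_sub_sq hf hsmooth u (u - (1 / L) • gradient f u)
  rw [sub_sub_cancel_left, inner_neg_right, real_inner_smul_right, real_inner_self_eq_norm_sq,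
    norm_neg, norm_smul, mul_pow, Real.norm_eq_abs, sq_abs] at hup
  have hinf := ciInf_le hbdd (u - (1 / L) • gradient f u)
  have hsq : ‖gradient f u‖ ^ 2 = 2 * L * (1 / L * ‖gradient f u‖ ^ 2
      - L / 2 * ((1 / L) ^ 2 * ‖gradient f u‖ ^ 2)) := by
    field_simp; ring
  rw [hsq]
  exact mul_le_mul_of_nonneg_left (by linarith) (by positivity)

theorem norm_gradient_sq_le_of_gd_step {L : ℝ} (hL : 0 < L) {f : E → ℝ}
    (hf : Differentiable ℝ f) (hcvx : ConvexOn ℝ univ f)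
    (hsmooth : ConvexOn ℝ univ (fun z => L / 2 * ‖z‖ ^ 2 - f z)) {t : ℝ} (ht : 1 ≤ t)
    {x x' : E} (hx' : x' = x - (t / L) • gradient f x) :
    t * ‖gradient f x'‖ ^ 2 ≤ t * (2 * t - 3) * ‖gradient f x‖ ^ 2
      + (2 - t) * (2 * L * (f x - f x')) := by
  have hfwd := add_inner_gradient_add_norm_sub_sq_le hL hf hcvx hsmooth x x'
  have hbwd := add_inner_gradient_add_norm_sub_sq_le hL hf hcvx hsmooth x' x
  rw [hx', sub_sub_cancel, real_inner_smul_right] at hfwd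
  rw [hx', sub_sub_cancel_left, inner_neg_right, real_inner_smul_right,
    real_inner_self_eq_norm_sq] at hbwd
  rw [← hx'] at hfwd hbwd
  rw [norm_sub_sq_real, real_inner_comm] at hfwd
  rw [norm_sub_sq_real, real_inner_comm] at hbwd
  set a := ‖gradient f x‖ ^ 2
  set b := ‖gradient f x'‖ ^ 2
  set τ := ⟪gradient f x, gradient f x'⟫
  have hfwd' : 2 * L * f x' + 2 * t * τ + (a - 2 * τ + b) ≤ 2 * L * f x := by
    have := mul_le_mul_of_nonneg_left hfwd (by positivity : (0 : ℝ) ≤ 2 * L)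
    field_simp at this
    linarith
  have hbwd' : 2 * L * f x - 2 * t * a + (b - 2 * τ + a) ≤ 2 * L * f x' := by
    have := mul_le_mul_of_nonneg_left hbwd (by positivity : (0 : ℝ) ≤ 2 * L)
    field_simp at this
    linarith
  nlinarith [mul_le_mul_of_nonneg_left hbwd' (by linarith : (0 : ℝ) ≤ t - 1)]

theorem dynamicStepsize_invariant_of_gd_step {L : ℝ} (hL : 0 < L) {f : E → ℝ}
    (hf : Differentiable ℝ f) (hcvx : ConvexOn ℝ univ f)
    (hsmooth : ConvexOn ℝ univ (fun z => L / 2 * ‖z‖ ^ 2 - f z)) {σ c : ℝ} (hσ : σ < 2)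
    {x x' : E} (hx' : x' = x - (dynamicStepsize σ / L) • gradient f x)
    (h : σ * ‖gradient f x‖ ^ 2 ≤ (2 - σ) * (2 * L * (c - f x))) :
    dynamicStepsize σ * ‖gradient f x'‖ ^ 2
      ≤ (2 - dynamicStepsize σ) * (2 * L * (c - f x')) := by
  have hstep := norm_gradient_sq_le_of_gd_step hL hf hcvx hsmooth (one_le_dynamicStepsize hσ) hx'
  have hquad := dynamicStepsize_quadratic hσ
  have ht2 := dynamicStepsize_lt_two hσ
  set t := dynamicStepsize σ
  -- the quadratic says `(2 - σ) t (2t - 3) = σ (2 - t)`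
  have hmul : (2 - σ) * (t * ‖gradient f x'‖ ^ 2) ≤ (2 - σ) * ((2 - t) * (2 * L * (c - f x'))) := by
    nlinarith [mul_le_mul_of_nonneg_left h (by linarith : (0 : ℝ) ≤ 2 - t),
      mul_le_mul_of_nonneg_left hstep (by linarith : (0 : ℝ) ≤ 2 - σ)]
  exact le_of_mul_le_mul_left hmul (by linarith)

theorem gd_dynamicStepsize_invariant {L : ℝ} (hL : 0 < L) {f : E → ℝ}
    (hf : Differentiable ℝ f) (hcvx : ConvexOn ℝ univ f)
    (hsmooth : ConvexOn ℝ univ (fun z => L / 2 * ‖z‖ ^ 2 - f z)) {s : ℕ → ℝ} (hs0 : s 0 = 0)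
    (hrec : ∀ i, s (i + 1) = dynamicStepsize (s i)) {N : ℕ} {x : ℕ → E}
    (hx : ∀ i < N, x (i + 1) = x i - (s (i + 1) / L) • gradient f (x i)) :
    ∀ i ≤ N, s i * ‖gradient f (x i)‖ ^ 2 ≤ (2 - s i) * (2 * L * (f (x 0) - f (x i))) := by
  intro i
  induction i with
  | zero => simp [hs0]
  | succ i ih =>
    intro hi
    rw [hrec]
    exact dynamicStepsize_invariant_of_gd_step hL hf hcvx hsmooth
      (lt_two_of_dynamicStepsize hs0 hrec i) (hrec i ▸ hx i hi) (ih (by omega))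

end Gradient

theorem gd_dynamic_stepsizes_convex_rate_general
    {E : Type*} [NormedAddCommGroup E] [InnerProductSpace ℝ E] [CompleteSpace E]
    (L : ℝ) (hL : 0 < L) (f : E → ℝ) (hdiff : Differentiable ℝ f)
    (hcvx : ConvexOn ℝ Set.univ f)
    (hsmooth : ConvexOn ℝ Set.univ (fun z => L / 2 * ‖z‖ ^ 2 - f z))
    (hbdd : BddBelow (Set.range f))
    (s : ℕ → ℝ) (hs0 : s 0 = 0)
    (hrec : ∀ i : ℕ,
      s (i + 1) = (3 - 2 * s i + Real.sqrt (9 - 4 * s i)) / (2 * (2 - s i)))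
    (N : ℕ)
    (x : ℕ → E) (hx : ∀ i < N, x (i + 1) = x i - (s (i + 1) / L) • gradient f (x i)) :
    1 / (2 * L) * ‖gradient f (x N)‖ ^ 2 ≤
      (f (x 0) - ⨅ y, f y) / (1 + s N / (2 - s N)) := by
  have hsN : s N < 2 := lt_two_of_dynamicStepsize hs0 hrec N
  have hinv := gd_dynamicStepsize_invariant hL hdiff hcvx hsmooth hs0 hrec hx N le_rfl
  have hlow := norm_gradient_sq_le_two_mul_sub_iInf hL hdiff hsmooth hbdd (x N)
  have hsum : 2 * ‖gradient f (x N)‖ ^ 2 ≤ (2 - s N) * (2 * L * (f (x 0) - ⨅ y, f y)) := by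
    nlinarith [mul_le_mul_of_nonneg_left hlow (by linarith : (0 : ℝ) ≤ 2 - s N)]
  have hden : 1 + s N / (2 - s N) = 2 / (2 - s N) := by
    field_simp [(by linarith : 2 - s N ≠ 0)]
    ring
  rw [hden, div_div_eq_mul_div, le_div_iff₀ two_pos]
  calc 1 / (2 * L) * ‖gradient f (x N)‖ ^ 2 * 2 = 1 / (2 * L) * (2 * ‖gradient f (x N)‖ ^ 2) := by
        ring
    _ ≤ 1 / (2 * L) * ((2 - s N) * (2 * L * (f (x 0) - ⨅ y, f y))) := by gcongr
    _ = (f (x 0) - ⨅ y, f y) * (2 - s N) := by field_simp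

/-- **Rate of gradient descent with the dynamic stepsize schedule on smooth convex
functions (Corollary 2 / `corollary:convergence_rates_convex_variable_stepsizes`).**
Let `f ∈ F_{0,L}` be bounded below, define (with shifted index, `s 0 = s_{-1} = 0`)
`s_{i} = (3 − 2s_{i−1} + √(9 − 4s_{i−1}))/(2(2 − s_{i−1}))`, and run `N ≥ 1` steps of
gradient descent with stepsizes `γ_i = s_i/L`. Then
`(1/(2L))‖∇f(x_N)‖² ≤ (f(x₀) − f_*)/(1 + s_{N−1}/(2 − s_{N−1}))`. -/
theorem gd_dynamic_stepsizes_convex_rate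
    {E : Type*} [NormedAddCommGroup E] [InnerProductSpace ℝ E] [CompleteSpace E]
    (L : ℝ) (hL : 0 < L) (f : E → ℝ) (hdiff : Differentiable ℝ f)
    (hcvx : ConvexOn ℝ Set.univ f)
    (hsmooth : ConvexOn ℝ Set.univ (fun z => L / 2 * ‖z‖ ^ 2 - f z))
    (hbdd : BddBelow (Set.range f))
    (s : ℕ → ℝ) (hs0 : s 0 = 0)
    (hrec : ∀ i : ℕ,
      s (i + 1) = (3 - 2 * s i + Real.sqrt (9 - 4 * s i)) / (2 * (2 - s i)))
    (N : ℕ) (hN : 1 ≤ N)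
    (x : ℕ → E) (hx : ∀ i < N, x (i + 1) = x i - (s (i + 1) / L) • gradient f (x i)) :
    1 / (2 * L) * ‖gradient f (x N)‖ ^ 2 ≤
      (f (x 0) - ⨅ y, f y) / (1 + s N / (2 - s N)) :=
  gd_dynamic_stepsizes_convex_rate_general L hL f hdiff hcvx hsmooth hbdd s hs0 hrec N x hx
end

section
/- Let L > 0 and μ < L, set κ := μ/L, and let f : E → ℝ be a differentiable function on a real inner product space E with f ∈ F_{μ,L}. Let γ > 0 with γL ∈ [1, 2/(1 + max{κ,0})), and let x' = x − γ∇f(x) be one gradient-descent step from a point x ∈ E. Then f(x) − f(x') ≥ (γ·[(2 − γL)(2 − γμ) − 1]/(2 − γL − γμ)) · ‖∇f(x)‖²/2 + (γ/(2 − γL − γμ)) · ‖∇f(x')‖²/2, where γμ := γ·μ and γL := γ·L. -/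
/-!
Convexity of `f - μ/2‖·‖²` and of `L/2‖·‖² - f` gives the quadratic bounds
`f u + ⟪∇f u, w - u⟫ + μ/2‖w - u‖² ≤ f w ≤ f u + ⟪∇f u, w - u⟫ + L/2‖w - u‖²`.
Evaluating the lower bound at `v` and the upper bound at `u` in the point
`w = u - (L - μ)⁻¹ d`, `d = ∇f u - ∇f v - μ (u - v)`, yields the co-coercivity inequality
`‖d‖² ≤ 2(L - μ)(f u - f v - ⟪∇f v, u - v⟫ - μ/2‖u - v‖²)`.
For the pairs `(x, x')` and `(x', x)` these two inequalities, weighted by `2 - 2γμ` and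
`2γL - 2`, add up to `4(L - μ)` times the claim with the denominator `2 - γL - γμ` cleared.
The step-size condition makes that denominator positive and, with `γL ≥ 1`, both weights
nonnegative.
-/

open Set RealInnerProductSpace

theorem ConvexOn.add_fderiv_sub_le_s17 {E : Type*} [NormedAddCommGroup E] [NormedSpace ℝ E]
    {s : Set E} {G : E → ℝ} {G' : E →L[ℝ] ℝ} {u w : E} (hG : ConvexOn ℝ s G)
    (hu : u ∈ s) (hw : w ∈ s) (hG' : HasFDerivAt G G' u) :
    G u + G' (w - u) ≤ G w := by
  set ℓ : ℝ →ᵃ[ℝ] E := AffineMap.lineMap u w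
  have hline : ConvexOn ℝ (ℓ ⁻¹' s) (G ∘ ℓ) := hG.comp_affineMap ℓ
  have hderiv : HasDerivAt (G ∘ ℓ) (G' (w - u)) 0 := by
    have hG0 : HasFDerivAt G G' (ℓ 0) := by simpa [ℓ] using hG'
    exact hG0.comp_hasDerivAt 0 AffineMap.hasDerivAt_lineMap
  have hslope := hline.le_slope_of_hasDerivAt (x := 0) (y := 1) (by simpa [ℓ] using hu)
    (by simpa [ℓ] using hw) one_pos hderiv
  simp only [slope_def_field, Function.comp_apply, AffineMap.lineMap_apply_one,
    AffineMap.lineMap_apply_zero, sub_zero, div_one, ℓ] at hslope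
  linarith

section InnerProductSpace

variable {E : Type*} [NormedAddCommGroup E] [InnerProductSpace ℝ E]

theorem add_inner_add_sq_le_of_convexOn_sub_sq [CompleteSpace E] {f : E → ℝ} {g u : E} {c : ℝ}
    (w : E) (hf : ConvexOn ℝ univ (fun z => f z - c / 2 * ‖z‖ ^ 2)) (hg : HasGradientAt f g u) :
    f u + ⟪g, w - u⟫ + c / 2 * ‖w - u‖ ^ 2 ≤ f w := by
  have hG' := hg.hasFDerivAt.sub ((hasStrictFDerivAt_norm_sq u).hasFDerivAt.const_mul (c / 2))
  have h := hf.add_fderiv_sub_le_s17 (mem_univ u) (mem_univ w) hG'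
  simp only [sub_apply, InnerProductSpace.toDual_apply_apply, smul_apply, innerSL_apply_apply,
    nsmul_eq_mul, Nat.cast_ofNat, smul_eq_mul] at h
  have hsq : ‖w - u‖ ^ 2 = ‖w‖ ^ 2 - ‖u‖ ^ 2 - 2 * ⟪u, w - u⟫ := by
    rw [norm_sub_sq_real, inner_sub_right, real_inner_self_eq_norm_sq, real_inner_comm]
    ring
  rw [hsq]
  linarith

theorem le_add_inner_add_sq_of_convexOn_sq_sub [CompleteSpace E] {f : E → ℝ} {g u : E} {c : ℝ}
    (w : E) (hf : ConvexOn ℝ univ (fun z => c / 2 * ‖z‖ ^ 2 - f z)) (hg : HasGradientAt f g u) :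
    f w ≤ f u + ⟪g, w - u⟫ + c / 2 * ‖w - u‖ ^ 2 := by
  have hf' : ConvexOn ℝ univ (fun z => -f z - -c / 2 * ‖z‖ ^ 2) := by
    convert hf using 2; ring
  have hneg : HasGradientAt (fun z => -f z) (-g) u := by
    rw [hasGradientAt_iff_hasFDerivAt, map_neg]
    exact hg.hasFDerivAt.neg
  have h := add_inner_add_sq_le_of_convexOn_sub_sq w hf' hneg
  rw [inner_neg_left] at h
  linarith

theorem norm_sub_sub_smul_sq_le_of_quadratic_bounds {f : E → ℝ} {g : E → E} {μ L : ℝ} (hμL : μ < L)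
    (hlow : ∀ u w, f u + ⟪g u, w - u⟫ + μ / 2 * ‖w - u‖ ^ 2 ≤ f w)
    (hup : ∀ u w, f w ≤ f u + ⟪g u, w - u⟫ + L / 2 * ‖w - u‖ ^ 2) (u v : E) :
    ‖g u - g v - μ • (u - v)‖ ^ 2 ≤
      2 * (L - μ) * (f u - f v - ⟪g v, u - v⟫ - μ / 2 * ‖u - v‖ ^ 2) := by
  set d := g u - g v - μ • (u - v) with hd
  set t := (L - μ)⁻¹
  have ht : (L - μ) * t = 1 := mul_inv_cancel₀ (sub_ne_zero.2 hμL.ne')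
  have hdd : ‖d‖ ^ 2 = ⟪g u, d⟫ - ⟪g v, d⟫ - μ * ⟪u - v, d⟫ := by
    rw [← real_inner_self_eq_norm_sq]
    conv_lhs => arg 2; rw [hd]
    rw [inner_sub_left, inner_sub_left, real_inner_smul_left]
  have hlow' := hlow v (u - t • d)
  have hup' := hup u (u - t • d)
  rw [show u - t • d - v = (u - v) - t • d by abel, norm_sub_sq_real, inner_sub_right,
    real_inner_smul_right, real_inner_smul_right, norm_smul, mul_pow, Real.norm_eq_abs, sq_abs]
    at hlow'
  rw [show u - t • d - u = -(t • d) by abel, norm_neg, inner_neg_right, real_inner_smul_right,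
    norm_smul, mul_pow, Real.norm_eq_abs, sq_abs] at hup'
  have key : t / 2 * ‖d‖ ^ 2 ≤ f u - f v - ⟪g v, u - v⟫ - μ / 2 * ‖u - v‖ ^ 2 := by
    linear_combination hlow' + hup' + t * hdd + t / 2 * ‖d‖ ^ 2 * ht
  calc ‖d‖ ^ 2 = 2 * (L - μ) * (t / 2 * ‖d‖ ^ 2) := by linear_combination -‖d‖ ^ 2 * ht
    _ ≤ _ := by gcongr

theorem gradient_step_decrease_of_quadratic_bounds {f : E → ℝ} {g : E → E} {μ L γ : ℝ} (hμL : μ < L)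
    (hlow : ∀ u w, f u + ⟪g u, w - u⟫ + μ / 2 * ‖w - u‖ ^ 2 ≤ f w)
    (hup : ∀ u w, f w ≤ f u + ⟪g u, w - u⟫ + L / 2 * ‖w - u‖ ^ 2)
    (hγL : 1 ≤ γ * L) (hγμ : γ * μ ≤ 1) (x : E) :
    γ * ((2 - γ * L) * (2 - γ * μ) - 1) * (‖g x‖ ^ 2 / 2) +
        γ * (‖g (x - γ • g x)‖ ^ 2 / 2) ≤
      (f x - f (x - γ • g x)) * (2 - γ * L - γ * μ) := by
  set x' := x - γ • g x
  have hA := norm_sub_sub_smul_sq_le_of_quadratic_bounds hμL hlow hup x x'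
  have hB := norm_sub_sub_smul_sq_le_of_quadratic_bounds hμL hlow hup x' x
  rw [show x - x' = γ • g x by simp [x']] at hA
  rw [show x' - x = -(γ • g x) by simp [x']] at hB
  simp only [← real_inner_self_eq_norm_sq, inner_sub_left, inner_sub_right, real_inner_smul_left,
    real_inner_smul_right, inner_neg_left, inner_neg_right, real_inner_comm (g x) (g x')]
    at hA hB ⊢
  have hP := mul_nonneg (by linarith : 0 ≤ 2 - 2 * (γ * μ)) (sub_nonneg.2 hA)
  have hQ := mul_nonneg (by linarith : 0 ≤ 2 * (γ * L) - 2) (sub_nonneg.2 hB)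
  have key : 0 ≤ 4 * (L - μ) * ((f x - f x') * (2 - γ * L - γ * μ) -
      (γ * ((2 - γ * L) * (2 - γ * μ) - 1) * (⟪g x, g x⟫ / 2) + γ * (⟪g x', g x'⟫ / 2))) := by
    linear_combination hP + hQ
  exact sub_nonneg.1 (nonneg_of_mul_nonneg_right key (by linarith))

end InnerProductSpace

theorem mul_add_mul_lt_two_of_lt_two_div {L μ γ : ℝ} (hL : 0 < L) (hγ : 0 ≤ γ)
    (h : γ * L < 2 / (1 + max (μ / L) 0)) : γ * L + γ * μ < 2 := by
  rw [lt_div_iff₀ (by positivity)] at h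
  rcases le_total μ 0 with hμ | hμ
  · rw [max_eq_right (div_nonpos_of_nonpos_of_nonneg hμ hL.le)] at h
    linarith [mul_nonpos_of_nonneg_of_nonpos hγ hμ]
  · rw [max_eq_left (by positivity)] at h
    have : γ * L * (1 + μ / L) = γ * L + γ * μ := by field_simp
    linarith

/-- **One-step sufficient decrease with long stepsizes
(Lemma 4 / `lemma:sufficient_decrease_h_geq_1`, inequality (N4SD)).**
For `f ∈ F_{μ,L}` with `μ < L`, `L > 0`, `κ = μ/L`, `γ > 0` with
`γL ∈ [1, 2/(1+[κ]₊))`, and one step `x' = x − γ∇f(x)`: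
`f(x) − f(x') ≥ (γ[(2−γL)(2−γμ)−1]/(2−γL−γμ))·‖∇f(x)‖²/2 +
 (γ/(2−γL−γμ))·‖∇f(x')‖²/2`. -/
theorem one_step_decrease_long_stepsize
    {E : Type*} [NormedAddCommGroup E] [InnerProductSpace ℝ E] [CompleteSpace E]
    (L μ : ℝ) (hL : 0 < L) (hμL : μ < L) (κ : ℝ) (hκ : κ = μ / L)
    (f : E → ℝ) (hdiff : Differentiable ℝ f)
    (hsmooth : ConvexOn ℝ Set.univ (fun z => L / 2 * ‖z‖ ^ 2 - f z))
    (hcurv : ConvexOn ℝ Set.univ (fun z => f z - μ / 2 * ‖z‖ ^ 2))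
    (γ : ℝ) (hγ : 0 < γ) (hγL : 1 ≤ γ * L) (hγL' : γ * L < 2 / (1 + max κ 0))
    (x x' : E) (hx' : x' = x - γ • gradient f x) :
    f x - f x' ≥
      γ * ((2 - γ * L) * (2 - γ * μ) - 1) / (2 - γ * L - γ * μ) *
          (‖gradient f x‖ ^ 2 / 2) +
        γ / (2 - γ * L - γ * μ) * (‖gradient f x'‖ ^ 2 / 2) := by
  have hgrad (z : E) : HasGradientAt f (gradient f z) z := (hdiff z).hasGradientAt
  have hlow (u w : E) := add_inner_add_sq_le_of_convexOn_sub_sq w hcurv (hgrad u)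
  have hup (u w : E) := le_add_inner_add_sq_of_convexOn_sq_sub w hsmooth (hgrad u)
  have hsum : γ * L + γ * μ < 2 := mul_add_mul_lt_two_of_lt_two_div hL hγ.le (hκ ▸ hγL')
  subst hx'
  rw [ge_iff_le, div_mul_eq_mul_div, div_mul_eq_mul_div, ← add_div, div_le_iff₀ (by linarith)]
  exact gradient_step_decrease_of_quadratic_bounds hμL hlow hup hγL (by linarith) x
end
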